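/- If (λ1 + 1)(λ3 + 1) = −b1 and k·(λ1 + λ2 + λ3) + λ1·λ2·λ3 = k·a1, then λ1·λ3 = −k. -/

import Mathlib

/-! Counting the neighbours of an endpoint of an edge by their distance to the other endpoint
gives `k = 1 + a₁ + b₁`. With it, the two hypotheses combine to
`(λ₂ - k) * (k + λ₁ λ₃) = 0`, and `λ₂ < λ₀ = k`. -/

open Finset

attribute [local instance] Classical.propDecidable

/-- The distance-`d` graph of `G`: two distinct vertices are adjacent iff
they are at distance `d` in `G`. -/
def SimpleGraph.distGraph {V : Type*} (G : SimpleGraph V) (d : ℕ) : SimpleGraph V where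
  Adj u v := u ≠ v ∧ G.dist u v = d
  symm := ⟨fun u v h => ⟨h.1.symm, by rw [SimpleGraph.dist_comm]; exact h.2⟩⟩
  loopless := ⟨fun u h => h.1 rfl⟩

/-- `G` is strongly distance-regular (for diameter `d`) if its distance-`d` graph
is strongly regular. -/
def SimpleGraph.IsStronglyDRG {V : Type*} [Fintype V] (G : SimpleGraph V) (d : ℕ) : Prop :=
  ∃ n k ℓ μ, (G.distGraph d).IsSRGWith n k ℓ μ

/-- `G` is distance-regular with diameter `d` and intersection numbers `c i, a i, b i`. -/
def SimpleGraph.IsDistRegular {V : Type*} [Fintype V] (G : SimpleGraph V)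
    (d : ℕ) (c a b : ℕ → ℕ) : Prop :=
  ∀ i ≤ d, ∀ u v : V, G.dist u v = i →
    ((G.neighborFinset v).filter (fun w => G.dist u w = i - 1)).card = c i ∧
    ((G.neighborFinset v).filter (fun w => G.dist u w = i)).card = a i ∧
    ((G.neighborFinset v).filter (fun w => G.dist u w = i + 1)).card = b i

/-- The adjacency matrix of `G`, viewed as an endomorphism of `V → ℝ`. -/
noncomputable def SimpleGraph.adjEnd {V : Type*} [Fintype V] [DecidableEq V]
    (G : SimpleGraph V) : Module.End ℝ (V → ℝ) :=
  Matrix.toLin' (G.adjMatrix ℝ)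

/-- The (real) adjacency spectrum of `G` consists exactly of the distinct eigenvalues
`lam 0 > lam 1 > ⋯ > lam d`, where `lam i` has multiplicity `m i`. -/
def SimpleGraph.HasSpectrum {V : Type*} [Fintype V] [DecidableEq V] (G : SimpleGraph V)
    {d : ℕ} (lam : Fin (d + 1) → ℝ) (m : Fin (d + 1) → ℕ) : Prop :=
  StrictAnti lam ∧
  (∀ i, Module.End.HasEigenvalue G.adjEnd (lam i)) ∧
  (∀ μ : ℝ, Module.End.HasEigenvalue G.adjEnd μ → ∃ i, μ = lam i) ∧
  (∀ i, m i = Module.finrank ℝ (Module.End.eigenspace G.adjEnd (lam i)))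

/-- `G` is antipodal (for diameter `d`): being equal or at distance `d`
is an equivalence relation on the vertices. -/
def SimpleGraph.IsAntipodal {V : Type*} (G : SimpleGraph V) (d : ℕ) : Prop :=
  Equivalence (fun u v => u = v ∨ G.dist u v = d)

/-- `G` is `r`-antipodal (for diameter `d`): antipodal with all classes of size `r`. -/
def SimpleGraph.IsAntipodalWith {V : Type*} (G : SimpleGraph V) (d r : ℕ) : Prop :=
  G.IsAntipodal d ∧ ∀ u : V, Nat.card {v : V | u = v ∨ G.dist u v = d} = r

namespace SimpleGraph

variable {V : Type*} {G : SimpleGraph V}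

lemma exists_adj_of_dist_ne_zero {u v : V} (h : G.dist u v ≠ 0) : ∃ w, G.Adj u w := by
  obtain ⟨p, -⟩ := exists_walk_of_dist_ne_zero h
  exact ⟨p.snd, p.adj_snd (Walk.not_nil_of_ne (dist_ne_zero_iff_ne_and_reachable.mp h).1)⟩

variable [Fintype V] {d k : ℕ} {c a b : ℕ → ℕ}

namespace IsDistRegular

theorem c_add_a_add_b (hdrg : G.IsDistRegular d c a b) (hreg : G.IsRegularOfDegree k)
    {i : ℕ} (hi : 1 ≤ i) (hid : i ≤ d) {u v : V} (huv : G.dist u v = i) :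
    c i + a i + b i = k := by
  obtain ⟨hc, ha, hb⟩ := hdrg i hid u v huv
  have hmaps : ∀ x ∈ G.neighborFinset v, G.dist u x ∈ ({i - 1, i, i + 1} : Finset ℕ) := by
    intro x hx
    have := ((G.mem_neighborFinset v x).mp hx).diff_dist_adj (u := u)
    simp only [mem_insert, mem_singleton]
    omega
  rw [← hreg v, ← card_neighborFinset_eq_degree, card_eq_sum_card_fiberwise hmaps,
    sum_insert (by simp only [mem_insert, mem_singleton]; omega),
    sum_insert (by simp), sum_singleton, hc, ha, hb, add_assoc]

theorem c_one (hdrg : G.IsDistRegular d c a b) (hd : 1 ≤ d) {u w : V} (huw : G.Adj u w) :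
    c 1 = 1 := by
  rw [← (hdrg 1 hd u w (dist_eq_one_iff_adj.mpr huw)).1, card_eq_one]
  refine ⟨u, ext fun x => ?_⟩
  simp only [mem_filter, mem_neighborFinset, mem_singleton, Nat.sub_self]
  constructor
  · rintro ⟨hwx, hx⟩
    exact ((huw.reachable.trans hwx.reachable).dist_eq_zero_iff.mp hx).symm
  · rintro rfl
    exact ⟨huw.symm, dist_self⟩

end IsDistRegular

end SimpleGraph

open SimpleGraph in
theorem stmt_14_general {V : Type*} [Fintype V] [DecidableEq V] (G : SimpleGraph V)
    (k : ℕ) (c a b : ℕ → ℕ) (lam : Fin 5 → ℝ) (m : Fin 5 → ℕ)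
    (hreg : G.IsRegularOfDegree k)
    (hdiam' : ∃ u v : V, G.dist u v = 4)
    (hdrg : G.IsDistRegular 4 c a b)
    (hspec : G.HasSpectrum lam m)
    (hlam0 : lam 0 = (k : ℝ))
    (h1 : (lam 1 + 1) * (lam 3 + 1) = -(b 1 : ℝ))
    (h2 : (k : ℝ) * (lam 1 + lam 2 + lam 3) + lam 1 * lam 2 * lam 3 = (k : ℝ) * a 1) :
    lam 1 * lam 3 = -(k : ℝ) := by
  obtain ⟨u, v, huv⟩ := hdiam'
  obtain ⟨w, huw⟩ := exists_adj_of_dist_ne_zero (G := G) (u := u) (v := v) (by omega)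
  have hdeg : (1 + a 1 + b 1 : ℝ) = k := by
    have := hdrg.c_add_a_add_b hreg le_rfl (by norm_num) (dist_eq_one_iff_adj.mpr huw)
    rw [hdrg.c_one (by norm_num) huw] at this
    exact_mod_cast this
  have hlam2 : lam 2 < k := hlam0 ▸ hspec.1 (show (0 : Fin 5) < 2 by decide)
  have hfactor : (lam 2 - k) * (k + lam 1 * lam 3) = 0 := by
    linear_combination h2 + (k : ℝ) * hdeg - (k : ℝ) * h1
  linarith [(mul_eq_zero.mp hfactor).resolve_left (sub_ne_zero.mpr hlam2.ne)]

theorem stmt_14 {V : Type*} [Fintype V] [DecidableEq V] (G : SimpleGraph V)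
    (n k : ℕ) (c a b : ℕ → ℕ) (lam : Fin 5 → ℝ) (m : Fin 5 → ℕ)
    (hn : Fintype.card V = n)
    (hconn : G.Connected)
    (hreg : G.IsRegularOfDegree k)
    (hdiam : ∀ u v : V, G.dist u v ≤ 4) (hdiam' : ∃ u v : V, G.dist u v = 4)
    (hdrg : G.IsDistRegular 4 c a b)
    (hspec : G.HasSpectrum lam m)
    (hlam0 : lam 0 = (k : ℝ)) (hm0 : m 0 = 1)
    (h1 : (lam 1 + 1) * (lam 3 + 1) = -(b 1 : ℝ))
    (h2 : (k : ℝ) * (lam 1 + lam 2 + lam 3) + lam 1 * lam 2 * lam 3 = (k : ℝ) * a 1) :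
    lam 1 * lam 3 = -(k : ℝ) :=
  stmt_14_general G k c a b lam m hreg hdiam' hdrg hspec hlam0 h1 h2
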